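/- arXiv:math/0511641 — 2 statements merged into one kernel-verified Lean document; each statement's English description precedes it below -/
import Mathlib

section
/- Let d ≥ 3 be odd, q a nonzero element of a field K, and θ*_0,...,θ*_d pairwise distinct elements of K such that whenever 0 ≤ i < j ≤ d, 0 ≤ r < s ≤ d, i + j = r + s, and i + j is odd, one has (θ*_i - θ*_j)/(θ*_r - θ*_s) = [j-i]_q/[s-r]_q (all [n]_q appearing being nonzero for odd n ≤ d). Set m = (d-1)/2. Then ∏_{0 ≤ ℓ < k ≤ m} (θ*_{2ℓ+1} - θ*_{2k})/(θ*_{2ℓ} - θ*_{2k+1}) = ∏_{1 ≤ i ≤ d, i odd} 1/[i]_q. -/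
open Finset

/-- The symmetric q-integer `[n]_q = q^{n-1} + q^{n-3} + ... + q^{1-n}`. -/
def qint {K : Type*} [Field K] (q : K) (n : ℕ) : K :=
  ∑ i ∈ Finset.range n, q ^ (n - 1 - i) * q⁻¹ ^ i

/-! Each factor `(θ*_{2l+1} - θ*_{2k}) / (θ*_{2l} - θ*_{2k+1})` has odd index sum `2(l+k)+1`,
so the hypothesis turns it into `[2(k-l)-1]_q / [2(k-l)+1]_q`. For fixed `k` these ratios
telescope to `1 / [2k+1]_q`, and the outer product runs over the odd numbers `2k+1 ≤ d`. -/

lemma qint_one {K : Type*} [Field K] (q : K) : qint q 1 = 1 := by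
  simp [qint]

lemma Finset.prod_range_div'_of_ne_zero {G₀ : Type*} [CommGroupWithZero G₀] (f : ℕ → G₀)
    (n : ℕ) (hf : ∀ i ≤ n, f i ≠ 0) :
    ∏ i ∈ range n, f i / f (i + 1) = f 0 / f n := by
  induction n with
  | zero => simp [div_self (hf 0 le_rfl)]
  | succ n ih =>
    rw [prod_range_succ, ih fun i hi => hf i (by omega), div_mul_div_cancel₀ (hf n (by omega))]

lemma Finset.prod_filter_odd_range {M : Type*} [CommMonoid M] (g : ℕ → M) (m : ℕ) :
    ∏ i ∈ (range (2 * m + 2)).filter Odd, g i = ∏ k ∈ range (m + 1), g (2 * k + 1) := by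
  have hodd : (range (2 * m + 2)).filter Odd = (range (m + 1)).image (fun k => 2 * k + 1) := by
    ext i
    simp only [mem_filter, mem_range, mem_image]
    constructor
    · rintro ⟨hi, j, rfl⟩
      exact ⟨j, by omega, rfl⟩
    · rintro ⟨j, hj, rfl⟩
      exact ⟨by omega, odd_two_mul_add_one j⟩
  rw [hodd, prod_image fun a _ b _ h => by omega]

lemma prod_range_qint_div_qint {K : Type*} [Field K] (q : K) (k : ℕ)
    (hq : ∀ j ≤ k, qint q (2 * j + 1) ≠ 0) :
    ∏ l ∈ range k, qint q (2 * (k - l) - 1) / qint q (2 * (k - l) + 1)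
      = (qint q (2 * k + 1))⁻¹ :=
  calc ∏ l ∈ range k, qint q (2 * (k - l) - 1) / qint q (2 * (k - l) + 1)
      = ∏ j ∈ range k, qint q (2 * j + 1) / qint q (2 * (j + 1) + 1) := by
        rw [← prod_range_reflect]
        refine prod_congr rfl fun l hl => ?_
        rw [mem_range] at hl
        congr 2 <;> omega
    _ = qint q 1 / qint q (2 * k + 1) :=
        prod_range_div'_of_ne_zero (fun j => qint q (2 * j + 1)) k hq
    _ = (qint q (2 * k + 1))⁻¹ := by rw [qint_one, one_div]

theorem stmt13_general {K : Type*} [Field K] (q : K)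
    (d : ℕ) (hodd : Odd d) (θ : ℕ → K)
    (hqn : ∀ n : ℕ, Odd n → n ≤ d → qint q n ≠ 0)
    (hratio : ∀ i j r s : ℕ, i < j → j ≤ d → r < s → s ≤ d →
      i + j = r + s → Odd (i + j) →
      (θ i - θ j) / (θ r - θ s) = qint q (j - i) / qint q (s - r))
    (m : ℕ) (hm : m = (d - 1) / 2) :
    ∏ k ∈ Finset.range (m+1), ∏ l ∈ Finset.range k,
        (θ (2 * l + 1) - θ (2 * k)) / (θ (2 * l) - θ (2 * k + 1))
      = ∏ i ∈ (Finset.range (d+1)).filter (fun i => Odd i), (qint q i)⁻¹ := by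
  obtain rfl : d = 2 * m + 1 := by obtain ⟨n, rfl⟩ := hodd; omega
  rw [prod_filter_odd_range]
  refine prod_congr rfl fun k hk => ?_
  rw [mem_range] at hk
  rw [← prod_range_qint_div_qint q k fun j hj => hqn _ (odd_two_mul_add_one j) (by omega)]
  refine prod_congr rfl fun l hl => ?_
  rw [mem_range] at hl
  rw [hratio _ _ _ _ (by omega) (by omega) (by omega) (by omega) (by omega) ⟨l + k, by ring⟩]
  congr 2 <;> omega

/-- evaluation of the product Ψ in terms of q-integers. -/
theorem stmt13 {K : Type*} [Field K] (q : K) (hq : q ≠ 0)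
    (d : ℕ) (hd : 3 ≤ d) (hodd : Odd d) (θ : ℕ → K)
    (hdist : ∀ i j : ℕ, i ≤ d → j ≤ d → θ i = θ j → i = j)
    (hqn : ∀ n : ℕ, Odd n → n ≤ d → qint q n ≠ 0)
    (hratio : ∀ i j r s : ℕ, i < j → j ≤ d → r < s → s ≤ d →
      i + j = r + s → Odd (i + j) →
      (θ i - θ j) / (θ r - θ s) = qint q (j - i) / qint q (s - r))
    (m : ℕ) (hm : m = (d - 1) / 2) :
    ∏ k ∈ Finset.range (m+1), ∏ l ∈ Finset.range k,
        (θ (2 * l + 1) - θ (2 * k)) / (θ (2 * l) - θ (2 * k + 1))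
      = ∏ i ∈ (Finset.range (d+1)).filter (fun i => Odd i), (qint q i)⁻¹ :=
  stmt13_general q d hodd θ hqn hratio m hm
end

section
/- Let θ*_0,...,θ*_d be pairwise distinct elements of a field K with d odd, set m = (d-1)/2, and define τ*_i(λ) = ∏_{h=0}^{i-1}(λ - θ*_h). Then ∏_{1 ≤ i ≤ d, i odd} τ*_{i-1}(θ*_{i-1})/τ*_i(θ*_i) = (-1)^{m+1} ∏_{0 ≤ i < j ≤ d} (θ*_i - θ*_j)^{(-1)^j}. -/
/-! Group the factors of the right-hand side in consecutive pairs `j = 2k, 2k+1`. Swapping the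
differences gives `∏_{i<j} (θ_i - θ_j) = (-1)^j τ_j(θ_j)`, so the pair contributes
`τ_{2k}(θ_{2k}) · (-τ_{2k+1}(θ_{2k+1}))⁻¹`, minus the `k`-th factor of the left-hand side;
the `m + 1` signs cancel the prefactor `(-1)^(m+1)`. -/

open Finset

theorem Finset.prod_range_two_mul {M : Type*} [CommMonoid M] (f : ℕ → M) (n : ℕ) :
    ∏ j ∈ range (2 * n), f j = ∏ k ∈ range n, f (2 * k) * f (2 * k + 1) := by
  induction n with
  | zero => simp
  | succ n ih => rw [Nat.mul_succ, prod_range_succ, prod_range_succ, prod_range_succ, ih, mul_assoc]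

theorem Finset.prod_filter_odd_range_two_mul {M : Type*} [CommMonoid M] (f : ℕ → M) (n : ℕ) :
    ∏ j ∈ (range (2 * n)).filter Odd, f j = ∏ k ∈ range n, f (2 * k + 1) := by
  rw [prod_filter, prod_range_two_mul]
  simp [Nat.not_odd_iff_even.mpr (even_two_mul _)]

theorem prod_range_sub_comm {R : Type*} [CommRing R] (θ : ℕ → R) (j : ℕ) :
    ∏ i ∈ range j, (θ i - θ j) = (-1) ^ j * ∏ i ∈ range j, (θ j - θ i) := by
  simp_rw [← neg_sub (θ j), prod_neg, card_range]

theorem prod_range_sub_zpow_pair {K : Type*} [Field K] (θ : ℕ → K) (k : ℕ) :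
    (∏ i ∈ range (2 * k), (θ i - θ (2 * k)) ^ ((-1 : ℤ) ^ (2 * k))) *
        ∏ i ∈ range (2 * k + 1), (θ i - θ (2 * k + 1)) ^ ((-1 : ℤ) ^ (2 * k + 1))
      = -((∏ h ∈ range (2 * k), (θ (2 * k) - θ h)) /
          ∏ h ∈ range (2 * k + 1), (θ (2 * k + 1) - θ h)) := by
  have heven : Even (2 * k) := even_two_mul k
  have hodd : Odd (2 * k + 1) := odd_two_mul_add_one k
  rw [heven.neg_one_pow, hodd.neg_one_pow]
  simp only [zpow_one, zpow_neg, prod_inv_distrib]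
  rw [prod_range_sub_comm, prod_range_sub_comm, heven.neg_one_pow, hodd.neg_one_pow]
  ring

theorem stmt16_general {K : Type*} [Field K] (d : ℕ) (hodd : Odd d)
    (θ : ℕ → K)
    (m : ℕ) (hm : m = (d - 1) / 2)
    (τ : ℕ → K → K)
    (hτ : ∀ i x, τ i x = ∏ h ∈ Finset.range i, (x - θ h)) :
    ∏ i ∈ (Finset.range (d+1)).filter (fun i => Odd i),
        τ (i-1) (θ (i-1)) / τ i (θ i)
      = (-1 : K) ^ (m+1) *
        ∏ j ∈ Finset.range (d+1), ∏ i ∈ Finset.range j,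
          (θ i - θ j) ^ ((-1 : ℤ) ^ j) := by
  have hd : d + 1 = 2 * (m + 1) := by obtain ⟨k, rfl⟩ := hodd; omega
  simp only [hτ, hd, prod_filter_odd_range_two_mul, Nat.add_sub_cancel]
  rw [prod_range_two_mul, prod_congr rfl fun k _ => prod_range_sub_zpow_pair θ k, prod_neg,
    card_range, ← mul_assoc, ← pow_add, Even.neg_one_pow ⟨_, rfl⟩, one_mul]

/-- product formula involving the τ polynomials. -/
theorem stmt16 {K : Type*} [Field K] (d : ℕ) (hodd : Odd d)
    (θ : ℕ → K)
    (hdist : ∀ i j : ℕ, i ≤ d → j ≤ d → θ i = θ j → i = j)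
    (m : ℕ) (hm : m = (d - 1) / 2)
    (τ : ℕ → K → K)
    (hτ : ∀ i x, τ i x = ∏ h ∈ Finset.range i, (x - θ h)) :
    ∏ i ∈ (Finset.range (d+1)).filter (fun i => Odd i),
        τ (i-1) (θ (i-1)) / τ i (θ i)
      = (-1 : K) ^ (m+1) *
        ∏ j ∈ Finset.range (d+1), ∏ i ∈ Finset.range j,
          (θ i - θ j) ^ ((-1 : ℤ) ^ j) :=
  stmt16_general d hodd θ m hm τ hτ
end
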